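/- Define the Berenstein–Zelevinsky cone for SL_m(C): let G_m be the set of integer points (a,b,c) with a+b+c = 2m−3, a,b,c ≥ 0, and exactly one of a,b,c odd, and let L_m ⊆ R^{G_m} be the subspace cut out by the hexagon conditions x(ξ_1)+x(ξ_2) = x(ξ'_1)+x(ξ'_2) for all opposite pairs of edges of all hexagons, K_m = L_m ∩ R^{G_m}_{≥0}, BZ(SL_m(C)) = K_m ∩ Z^{G_m}. Then the projection map pr: BZ(SL_m(C)) → Z^{3(m−1)} to boundary weight data is a semigroup homomorphism, and every element of the phylogenetic semigroup R^{pr}_{0,3}(Z/mZ) lies in the image pr(BZ(SL_m(C))). -/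

import Mathlib

namespace BZsetup

variable (m : ℕ)

/-- Exactly one of the three coordinates is odd. -/
def oneOdd (p : ℤ × ℤ × ℤ) : Prop :=
  (Odd p.1 ∧ Even p.2.1 ∧ Even p.2.2) ∨ (Even p.1 ∧ Odd p.2.1 ∧ Even p.2.2) ∨
    (Even p.1 ∧ Even p.2.1 ∧ Odd p.2.2)

/-- `G_m`: the integer points `(a,b,c)` with `a+b+c = 2m−3`, `a,b,c ≥ 0`, and exactly
one coordinate odd (the vertices of the hexagons and triangles). -/
def Gset : Set (ℤ × ℤ × ℤ) :=
  {p | p.1 + p.2.1 + p.2.2 = 2 * (m : ℤ) - 3 ∧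
    0 ≤ p.1 ∧ 0 ≤ p.2.1 ∧ 0 ≤ p.2.2 ∧ oneOdd p}

/-- The Berenstein–Zelevinsky semigroup `BZ(SL_m(ℂ))`: nonnegative integer labelings
of `G_m` satisfying, for every hexagon (centered at a point `h` of the triangle with
all coordinates odd), the three conditions `x(ξ₁)+x(ξ₂) = x(ξ'₁)+x(ξ'₂)` for the three
opposite pairs of edges of the hexagon. -/
def BZ : Set ((ℤ × ℤ × ℤ) → ℤ) :=
  {x | (∀ p, p ∉ Gset m → x p = 0) ∧ (∀ p, 0 ≤ x p) ∧
    (∀ h : ℤ × ℤ × ℤ, Odd h.1 → Odd h.2.1 → Odd h.2.2 →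
      0 ≤ h.1 → 0 ≤ h.2.1 → 0 ≤ h.2.2 →
      h.1 + h.2.1 + h.2.2 = 2 * (m : ℤ) - 3 →
      x (h.1 + 1, h.2.1 - 1, h.2.2) + x (h.1 + 1, h.2.1, h.2.2 - 1)
          = x (h.1 - 1, h.2.1 + 1, h.2.2) + x (h.1 - 1, h.2.1, h.2.2 + 1) ∧
      x (h.1 + 1, h.2.1, h.2.2 - 1) + x (h.1, h.2.1 + 1, h.2.2 - 1)
          = x (h.1 - 1, h.2.1, h.2.2 + 1) + x (h.1, h.2.1 - 1, h.2.2 + 1) ∧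
      x (h.1, h.2.1 + 1, h.2.2 - 1) + x (h.1 - 1, h.2.1 + 1, h.2.2)
          = x (h.1, h.2.1 - 1, h.2.2 + 1) + x (h.1 + 1, h.2.1 - 1, h.2.2))}

/-- The projection of a BZ triangle to its boundary weight data
`(λ₁,…,λ_{m−1}; μ₁,…,μ_{m−1}; ν₁,…,ν_{m−1}) ∈ ℤ^{3(m−1)}`, given by pairwise sums of
neighboring boundary labels. -/
def pr (x : (ℤ × ℤ × ℤ) → ℤ) : Fin 3 × Fin (m - 1) → ℤ := fun q =>
  let i : ℤ := ((q.2 : ℕ) : ℤ) + 1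
  if q.1 = 0 then
    x (2 * ((m : ℤ) - i) - 1, 2 * (i - 1), 0) + x (2 * ((m : ℤ) - i) - 2, 2 * i - 1, 0)
  else if q.1 = 1 then
    x (0, 2 * ((m : ℤ) - i) - 1, 2 * (i - 1)) + x (0, 2 * ((m : ℤ) - i) - 2, 2 * i - 1)
  else
    x (2 * (i - 1), 0, 2 * ((m : ℤ) - i) - 1) + x (2 * i - 1, 0, 2 * ((m : ℤ) - i) - 2)

/-- The `m²` vertices of the tripod polytope `P_{0,3}(ℤ/mℤ)`, realized as 0/1 vectors
in `ℤ^{3(m−1)}`: labelings of the three tripod edges by fundamental weights whose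
indices sum to `0 mod m`. -/
def vtx : Set (Fin 3 × Fin (m - 1) → ℤ) :=
  {w | ∃ f : Fin 3 → ZMod m, f 0 + f 1 + f 2 = 0 ∧
    w = fun q => if f q.1 = (((q.2 : ℕ) + 1 : ℕ) : ZMod m) then 1 else 0}

end BZsetup

/-!
Since `pr` is additive and `BZ(SL_m(ℂ))` is an additive submonoid, `pr(BZ(SL_m(ℂ)))` is a
submonoid, so it suffices to hit each vertex of `P_{0,3}(ℤ/mℤ)`. A vertex is a triple of
fundamental weights `(ω_A, ω_B, ω_C)`, `0 ≤ A, B, C < m`, with `A + B + C ∈ {0, m, 2m}` and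
`ω_0 = 0`. For `A + B + C = m` it is the boundary of the 0/1 triangle with 1's along three
segments emanating from the hexagon centred at `(2C - 1, 2A - 1, 2B - 1)` (a single segment
parallel to an edge when one index vanishes); for `A + B + C = 2m` it is the boundary of the
mirror configuration around `(2(m - A) - 1, 2(m - B) - 1, 2(m - C) - 1)`.
-/

namespace BZsetup

variable (m : ℕ)

lemma pr_add (x y : (ℤ × ℤ × ℤ) → ℤ) : pr m (x + y) = pr m x + pr m y := by
  funext q
  simp only [pr, Pi.add_apply]
  split_ifs <;> ring

def prHom : ((ℤ × ℤ × ℤ) → ℤ) →+ (Fin 3 × Fin (m - 1) → ℤ) :=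
  AddMonoidHom.mk' (pr m) (pr_add m)

def bzSubmonoid : AddSubmonoid ((ℤ × ℤ × ℤ) → ℤ) where
  carrier := BZ m
  zero_mem' := ⟨fun _ _ => rfl, fun _ => le_rfl, fun _ _ _ _ _ _ _ _ => by simp⟩
  add_mem' := by
    rintro x y ⟨hx₀, hx₁, hx₂⟩ ⟨hy₀, hy₁, hy₂⟩
    refine ⟨fun p hp => by simp [hx₀ p hp, hy₀ p hp], fun p => add_nonneg (hx₁ p) (hy₁ p), ?_⟩
    intro h o₁ o₂ o₃ n₁ n₂ n₃ hs
    obtain ⟨a₁, a₂, a₃⟩ := hx₂ h o₁ o₂ o₃ n₁ n₂ n₃ hs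
    obtain ⟨b₁, b₂, b₃⟩ := hy₂ h o₁ o₂ o₃ n₁ n₂ n₃ hs
    simp only [Pi.add_apply]
    omega

lemma mk_mem_Gset {x y z : ℤ} (hs : x + y + z = 2 * (m : ℤ) - 3)
    (hx : 0 ≤ x) (hy : 0 ≤ y) (hz : 0 ≤ z)
    (hodd : (x % 2 = 1 ∧ y % 2 = 0 ∧ z % 2 = 0) ∨ (x % 2 = 0 ∧ y % 2 = 1 ∧ z % 2 = 0) ∨
      (x % 2 = 0 ∧ y % 2 = 0 ∧ z % 2 = 1)) : (x, y, z) ∈ Gset m := by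
  refine ⟨hs, hx, hy, hz, ?_⟩
  simp only [oneOdd, Int.odd_iff, Int.even_iff]
  omega

def fundamentalWeights (a : Fin 3 → ℤ) : Fin 3 × Fin (m - 1) → ℤ :=
  fun q => if a q.1 = ((q.2 : ℕ) : ℤ) + 1 then 1 else 0

def tripod (a : Fin 3 → ℤ) : ℤ × ℤ × ℤ → ℤ := fun (x, y, z) =>
  if x + y + z = 2 * (m : ℤ) - 3 ∧ 0 ≤ x ∧ 0 ≤ y ∧ 0 ≤ z ∧
      ((y = 2 * a 0 - 1 ∧ x % 2 = 0 ∧ z % 2 = 0 ∧ z ≤ 2 * a 1 - 2) ∨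
       (z = 2 * a 1 - 1 ∧ x % 2 = 0 ∧ y % 2 = 0 ∧ x ≤ 2 * a 2 - 2) ∨
       (x = 2 * a 2 - 1 ∧ y % 2 = 0 ∧ z % 2 = 0 ∧ y ≤ 2 * a 0 - 2))
  then 1 else 0

def antitripod (a : Fin 3 → ℤ) : ℤ × ℤ × ℤ → ℤ := fun (x, y, z) =>
  if x + y + z = 2 * (m : ℤ) - 3 ∧ 0 ≤ x ∧ 0 ≤ y ∧ 0 ≤ z ∧
      ((x = 2 * (m - a 0) - 1 ∧ y % 2 = 0 ∧ z % 2 = 0 ∧ z ≤ 2 * (m - a 2) - 2) ∨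
       (y = 2 * (m - a 1) - 1 ∧ x % 2 = 0 ∧ z % 2 = 0 ∧ x ≤ 2 * (m - a 0) - 2) ∨
       (z = 2 * (m - a 2) - 1 ∧ x % 2 = 0 ∧ y % 2 = 0 ∧ y ≤ 2 * (m - a 1) - 2))
  then 1 else 0

section Evaluation

variable {m} {a : Fin 3 → ℤ} {x y z : ℤ}

lemma tripod_apply_of_odd_fst (hx : x % 2 = 1) :
    tripod m a (x, y, z) =
      if x + y + z = 2 * (m : ℤ) - 3 ∧ 0 ≤ x ∧ 0 ≤ y ∧ 0 ≤ z ∧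
        x = 2 * a 2 - 1 ∧ y % 2 = 0 ∧ z % 2 = 0 ∧ y ≤ 2 * a 0 - 2 then 1 else 0 := by
  simp only [tripod]; split_ifs <;> omega

lemma tripod_apply_of_odd_snd (hy : y % 2 = 1) :
    tripod m a (x, y, z) =
      if x + y + z = 2 * (m : ℤ) - 3 ∧ 0 ≤ x ∧ 0 ≤ y ∧ 0 ≤ z ∧
        y = 2 * a 0 - 1 ∧ x % 2 = 0 ∧ z % 2 = 0 ∧ z ≤ 2 * a 1 - 2 then 1 else 0 := by
  simp only [tripod]; split_ifs <;> omega

lemma tripod_apply_of_odd_thd (hz : z % 2 = 1) :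
    tripod m a (x, y, z) =
      if x + y + z = 2 * (m : ℤ) - 3 ∧ 0 ≤ x ∧ 0 ≤ y ∧ 0 ≤ z ∧
        z = 2 * a 1 - 1 ∧ x % 2 = 0 ∧ y % 2 = 0 ∧ x ≤ 2 * a 2 - 2 then 1 else 0 := by
  simp only [tripod]; split_ifs <;> omega

lemma antitripod_apply_of_odd_fst (hx : x % 2 = 1) :
    antitripod m a (x, y, z) =
      if x + y + z = 2 * (m : ℤ) - 3 ∧ 0 ≤ x ∧ 0 ≤ y ∧ 0 ≤ z ∧
        x = 2 * (m - a 0) - 1 ∧ y % 2 = 0 ∧ z % 2 = 0 ∧ z ≤ 2 * (m - a 2) - 2 then 1 else 0 := by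
  simp only [antitripod]; split_ifs <;> omega

lemma antitripod_apply_of_odd_snd (hy : y % 2 = 1) :
    antitripod m a (x, y, z) =
      if x + y + z = 2 * (m : ℤ) - 3 ∧ 0 ≤ x ∧ 0 ≤ y ∧ 0 ≤ z ∧
        y = 2 * (m - a 1) - 1 ∧ x % 2 = 0 ∧ z % 2 = 0 ∧ x ≤ 2 * (m - a 0) - 2 then 1 else 0 := by
  simp only [antitripod]; split_ifs <;> omega

lemma antitripod_apply_of_odd_thd (hz : z % 2 = 1) :
    antitripod m a (x, y, z) =
      if x + y + z = 2 * (m : ℤ) - 3 ∧ 0 ≤ x ∧ 0 ≤ y ∧ 0 ≤ z ∧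
        z = 2 * (m - a 2) - 1 ∧ x % 2 = 0 ∧ y % 2 = 0 ∧ y ≤ 2 * (m - a 1) - 2 then 1 else 0 := by
  simp only [antitripod]; split_ifs <;> omega

end Evaluation

lemma tripod_mem_BZ (a : Fin 3 → ℤ) (hs : a 0 + a 1 + a 2 = m) : tripod m a ∈ BZ m := by
  refine ⟨?_, ?_, ?_⟩
  · rintro ⟨x, y, z⟩ hp
    simp only [tripod]
    split_ifs
    · exact absurd (mk_mem_Gset m (by omega) (by omega) (by omega) (by omega) (by omega)) hp
    · rfl
  · rintro ⟨x, y, z⟩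
    simp only [tripod]
    split_ifs <;> omega
  · rintro ⟨x, y, z⟩ hx hy hz hx₀ hy₀ hz₀ hxyz
    dsimp only at hx₀ hy₀ hz₀ hxyz
    simp only [Int.odd_iff] at hx hy hz
    simp only [tripod_apply_of_odd_fst hx, tripod_apply_of_odd_snd hy, tripod_apply_of_odd_thd hz]
    refine ⟨?_, ?_, ?_⟩ <;> (split_ifs <;> omega)

lemma antitripod_mem_BZ (a : Fin 3 → ℤ) (hs : a 0 + a 1 + a 2 = 2 * m) :
    antitripod m a ∈ BZ m := by
  refine ⟨?_, ?_, ?_⟩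
  · rintro ⟨x, y, z⟩ hp
    simp only [antitripod]
    split_ifs
    · exact absurd (mk_mem_Gset m (by omega) (by omega) (by omega) (by omega) (by omega)) hp
    · rfl
  · rintro ⟨x, y, z⟩
    simp only [antitripod]
    split_ifs <;> omega
  · rintro ⟨x, y, z⟩ hx hy hz hx₀ hy₀ hz₀ hxyz
    dsimp only at hx₀ hy₀ hz₀ hxyz
    simp only [Int.odd_iff] at hx hy hz
    simp only [antitripod_apply_of_odd_fst hx, antitripod_apply_of_odd_snd hy,
      antitripod_apply_of_odd_thd hz]
    refine ⟨?_, ?_, ?_⟩ <;> (split_ifs <;> omega)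

lemma pr_tripod (a : Fin 3 → ℤ) (ha : ∀ j, 0 ≤ a j) (hs : a 0 + a 1 + a 2 = m) :
    pr m (tripod m a) = fundamentalWeights m a := by
  have h₀ := ha 0; have h₁ := ha 1; have h₂ := ha 2
  funext ⟨j, k⟩
  have hk : ((k : ℕ) : ℤ) + 2 ≤ m := by have := k.isLt; omega
  obtain rfl | rfl | rfl : j = 0 ∨ j = 1 ∨ j = 2 := by fin_cases j <;> simp
  all_goals
    simp (disch := omega) only [pr, fundamentalWeights, Fin.isValue, Fin.reduceEq, reduceIte,
      tripod_apply_of_odd_fst, tripod_apply_of_odd_snd, tripod_apply_of_odd_thd]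
    split_ifs <;> omega

lemma pr_antitripod (a : Fin 3 → ℤ) (ha : ∀ j, a j < m) (hs : a 0 + a 1 + a 2 = 2 * m) :
    pr m (antitripod m a) = fundamentalWeights m a := by
  have h₀ := ha 0; have h₁ := ha 1; have h₂ := ha 2
  funext ⟨j, k⟩
  have hk : ((k : ℕ) : ℤ) + 2 ≤ m := by have := k.isLt; omega
  obtain rfl | rfl | rfl : j = 0 ∨ j = 1 ∨ j = 2 := by fin_cases j <;> simp
  all_goals
    simp (disch := omega) only [pr, fundamentalWeights, Fin.isValue, Fin.reduceEq, reduceIte,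
      antitripod_apply_of_odd_fst, antitripod_apply_of_odd_snd, antitripod_apply_of_odd_thd]
    split_ifs <;> omega

lemma exists_fundamentalWeights_eq_of_mem_vtx [NeZero m] {w : Fin 3 × Fin (m - 1) → ℤ}
    (hw : w ∈ vtx m) :
    ∃ a : Fin 3 → ℤ, (∀ j, 0 ≤ a j ∧ a j < m) ∧
      (a 0 + a 1 + a 2 = 0 ∨ a 0 + a 1 + a 2 = m ∨ a 0 + a 1 + a 2 = 2 * m) ∧
      fundamentalWeights m a = w := by
  obtain ⟨f, hf, rfl⟩ := hw
  have h₀ := (f 0).val_lt; have h₁ := (f 1).val_lt; have h₂ := (f 2).val_lt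
  obtain ⟨c, hc⟩ : m ∣ (f 0).val + (f 1).val + (f 2).val := by
    rw [← ZMod.natCast_eq_zero_iff]
    push_cast
    simpa only [ZMod.natCast_zmod_val] using hf
  have hc₃ : c < 3 := Nat.lt_of_mul_lt_mul_left (a := m) (by omega)
  refine ⟨fun j => (f j).val, fun j => ⟨by positivity, ?_⟩, ?_, ?_⟩
  · exact Int.ofNat_lt.2 (f j).val_lt
  · dsimp only
    interval_cases c <;> omega
  · funext q
    have hq : (q.2 : ℕ) + 1 < m := by have := q.2.isLt; omega
    refine if_congr ?_ rfl rfl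
    rw [← (ZMod.val_injective m).eq_iff, ZMod.val_natCast_of_lt hq]
    dsimp only
    omega

lemma fundamentalWeights_mem_map_pr (a : Fin 3 → ℤ) (ha : ∀ j, 0 ≤ a j ∧ a j < m)
    (hs : a 0 + a 1 + a 2 = 0 ∨ a 0 + a 1 + a 2 = m ∨ a 0 + a 1 + a 2 = 2 * m) :
    fundamentalWeights m a ∈ (bzSubmonoid m).map (prHom m) := by
  have h₀ := ha 0; have h₁ := ha 1; have h₂ := ha 2
  rcases hs with hs | hs | hs
  · convert zero_mem ((bzSubmonoid m).map (prHom m))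
    funext ⟨j, k⟩
    have : a j = 0 := by fin_cases j <;> simp <;> omega
    simp only [fundamentalWeights, this, Pi.zero_apply]
    split_ifs <;> omega
  · exact ⟨tripod m a, tripod_mem_BZ m a hs, pr_tripod m a (fun j => (ha j).1) hs⟩
  · exact ⟨antitripod m a, antitripod_mem_BZ m a hs, pr_antitripod m a (fun j => (ha j).2) hs⟩

end BZsetup

open BZsetup in
theorem stmt15 (m : ℕ) (hm : 2 ≤ m) :
    (∀ x y : (ℤ × ℤ × ℤ) → ℤ, pr m (x + y) = pr m x + pr m y) ∧
    ∀ u ∈ AddSubmonoid.closure (vtx m), ∃ x ∈ BZ m, pr m x = u := by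
  have : NeZero m := ⟨by omega⟩
  refine ⟨pr_add m, fun u hu => ?_⟩
  have hvtx : vtx m ⊆ (bzSubmonoid m).map (prHom m) := fun w hw => by
    obtain ⟨a, ha, hs, rfl⟩ := exists_fundamentalWeights_eq_of_mem_vtx m hw
    exact fundamentalWeights_mem_map_pr m a ha hs
  obtain ⟨x, hx, rfl⟩ := AddSubmonoid.closure_le.2 hvtx hu
  exact ⟨x, hx, rfl⟩
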